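/- Let d ≥ 1 and X = ∏_{l=1}^d [L_l, U_l] ⊂ ℝ^d with L_l < U_l. Let h : X → ℝ be continuous with a unique minimizer x* ∈ X satisfying the first-order dominating condition (the set of minimizers of h over X equals the set of minimizers over X of x ↦ ∑_{l=1}^d ∫_{X_{−l}} h(x) dx_{−l}), let φ : ℝ → ℝ be continuous and strictly monotone increasing, and set f = φ ∘ h. Let g_n : X → ℝ be continuous with sup_{x ∈ X} |h(x) − g_n(x)| → 0, let x̂_n be the point whose l-th coordinate minimizes x_l ↦ ∫_{X_{−l}} g_n(x) dx_{−l} over [L_l, U_l], and let (a_n) be any sequence of points in X satisfying g_n(a_n) ≤ g_n(x̂_n) for all n. Then h(a_n) → h(x*) and f(a_n) → f(x*). -/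

import Mathlib

open MeasureTheory

/-- The rectangle `∏_{l} [L l, U l] ⊂ ℝ^d`. -/
def rect {d : ℕ} (L U : Fin d → ℝ) : Set (Fin d → ℝ) :=
  Set.univ.pi fun l => Set.Icc (L l) (U l)

/-- The `l`-th marginal mean function of `h : ℝ^d → ℝ` over the rectangle `∏ [L j, U j]`. -/
noncomputable def marginalMean {d : ℕ} (L U : Fin d → ℝ)
    (h : (Fin d → ℝ) → ℝ) (l : Fin d) (t : ℝ) : ℝ :=
  ∫ y in Set.univ.pi (fun j : {j : Fin d // j ≠ l} => Set.Icc (L j.1) (U j.1)),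
    h (fun i => if hi : i = l then t else y ⟨i, hi⟩)

/-!
By the first-order dominating condition, `x*` is also the unique minimizer over `X` of the
marginal sum `m x = ∑ l, ∫_{X_{-l}} h`. Marginal means of `g n` are within `ε n · vol X_{-l}` of
those of `h`, so the BOMM point `x̂ n` minimizes `m` up to `O(ε n)`; by compactness `x̂ n → x*`,
hence `h (x̂ n) → h x*`. Finally `h x* ≤ h (a n) ≤ g n (a n) + ε n ≤ g n (x̂ n) + ε n ≤
h (x̂ n) + 2 ε n`.
-/

open Filter Topology Set

section ParametricIntegral

variable {X Y E : Type*} [TopologicalSpace X] [FirstCountableTopology X]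
  [TopologicalSpace Y] [T2Space Y] [MeasurableSpace Y] [OpensMeasurableSpace Y]
  [SecondCountableTopology Y]
  [NormedAddCommGroup E] [NormedSpace ℝ E] {μ : Measure Y} [IsFiniteMeasureOnCompacts μ]

theorem continuousOn_setIntegral_of_continuousOn_prod {f : X × Y → E} {s : Set X} {K : Set Y}
    (hs : IsCompact s) (hK : IsCompact K) (hf : ContinuousOn f (s ×ˢ K)) :
    ContinuousOn (fun x => ∫ y in K, f (x, y) ∂μ) s := by
  obtain ⟨C, hC⟩ := (hs.prod hK).exists_bound_of_continuousOn hf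
  have hKm : MeasurableSet K := hK.isClosed.measurableSet
  have hslice : ∀ x ∈ s, ContinuousOn (fun y => f (x, y)) K := fun x hx =>
    hf.comp (Continuous.prodMk_right x).continuousOn fun y hy => ⟨hx, hy⟩
  refine continuousOn_of_dominated (bound := fun _ => C)
    (fun x hx => (hslice x hx).aestronglyMeasurable hKm)
    (fun x hx => (ae_restrict_iff' hKm).2 (.of_forall fun y hy => hC _ ⟨hx, hy⟩))
    (integrableOn_const hK.measure_ne_top) ((ae_restrict_iff' hKm).2 (.of_forall fun y hy => ?_))
  exact hf.comp (Continuous.prodMk_left y).continuousOn fun x hx => ⟨hx, hy⟩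

end ParametricIntegral

theorem abs_setIntegral_sub_setIntegral_le {Y : Type*} [MeasurableSpace Y] {μ : Measure Y}
    {s : Set Y} {f g : Y → ℝ} {e : ℝ} (hs : μ s < ⊤) (hf : IntegrableOn f s μ)
    (hg : IntegrableOn g s μ) (hfg : ∀ y ∈ s, |f y - g y| ≤ e) :
    |∫ y in s, f y ∂μ - ∫ y in s, g y ∂μ| ≤ e * μ.real s := by
  rw [← integral_sub hf hg, ← Real.norm_eq_abs]
  exact norm_setIntegral_le_of_norm_le_const hs hfg

theorem IsCompact.tendsto_nhds_of_minimizing {X ι : Type*} [TopologicalSpace X] {K : Set X}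
    (hK : IsCompact K) {m : X → ℝ} (hm : ContinuousOn m K) {x₀ : X}
    (hmin : ∀ x ∈ K, x ≠ x₀ → m x₀ < m x) {l : Filter ι} {u : ι → X}
    (huK : ∀ᶠ i in l, u i ∈ K) {b : ι → ℝ} (hb : Tendsto b l (𝓝 (m x₀)))
    (hmu : ∀ᶠ i in l, m (u i) ≤ b i) :
    Tendsto u l (𝓝 x₀) := by
  refine tendsto_nhds.2 fun W hW hx₀W => ?_
  rcases (K \ W).eq_empty_or_nonempty with hKW | hKW
  · filter_upwards [huK] with i hi
    by_contra hiW
    exact (hKW ▸ ⟨hi, hiW⟩ : u i ∈ (∅ : Set X))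
  · -- `m` exceeds `m x₀` by a fixed amount on the compact set `K \ W`.
    obtain ⟨z, hz, hzmin⟩ := (hK.diff hW).exists_isMinOn hKW (hm.mono sdiff_subset)
    have hz₀ : m x₀ < m z := hmin z hz.1 fun h => hz.2 (h ▸ hx₀W)
    filter_upwards [huK, hmu, hb.eventually_lt_const hz₀] with i hiK hib hbz
    by_contra hiW
    exact (hzmin ⟨hiK, hiW⟩).not_gt (hib.trans_lt hbz)

theorem lt_of_setOf_isMinOn_eq {α : Type*} {K : Set α} {h m : α → ℝ}
    (heq : {x | x ∈ K ∧ IsMinOn h K x} = {x | x ∈ K ∧ IsMinOn m K x})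
    {x₀ : α} (hx₀ : x₀ ∈ K) (hmin : ∀ x ∈ K, x ≠ x₀ → h x₀ < h x) :
    ∀ x ∈ K, x ≠ x₀ → m x₀ < m x := by
  intro x hx hne
  by_contra! hle
  have hx₀_min : x₀ ∈ {x | x ∈ K ∧ IsMinOn h K x} := ⟨hx₀, isMinOn_iff.2 fun y hy => by
    rcases eq_or_ne y x₀ with rfl | hy₀
    exacts [le_rfl, (hmin y hy hy₀).le]⟩
  rw [heq] at hx₀_min
  have hx_min : x ∈ {x | x ∈ K ∧ IsMinOn m K x} :=
    ⟨hx, isMinOn_iff.2 fun y hy => hle.trans (hx₀_min.2 hy)⟩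
  rw [← heq] at hx_min
  exact (hmin x hx hne).not_ge (hx_min.2 hx₀)

section MarginalMean

variable {d : ℕ} {L U : Fin d → ℝ}

def sideBox (L U : Fin d → ℝ) (l : Fin d) : Set ({j : Fin d // j ≠ l} → ℝ) :=
  Set.univ.pi fun j => Icc (L j.1) (U j.1)

theorem marginalMean_eq_setIntegral (h : (Fin d → ℝ) → ℝ) (l : Fin d) (t : ℝ) :
    marginalMean L U h l t =
      ∫ y in sideBox L U l, h ((Homeomorph.funSplitAt ℝ l).symm (t, y)) := by
  unfold marginalMean sideBox
  congr with y
  congr with i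
  by_cases hi : i = l
  · subst hi; simp
  · simp [hi]

theorem funSplitAt_symm_mem_rect {l : Fin d} {t : ℝ} {y : {j : Fin d // j ≠ l} → ℝ}
    (ht : t ∈ Icc (L l) (U l)) (hy : y ∈ sideBox L U l) :
    (Homeomorph.funSplitAt ℝ l).symm (t, y) ∈ rect L U := by
  intro i _
  by_cases hi : i = l
  · subst hi; simpa using ht
  · simpa [hi] using hy ⟨i, hi⟩ (mem_univ _)

theorem continuousOn_comp_funSplitAt_symm {h : (Fin d → ℝ) → ℝ}
    (hh : ContinuousOn h (rect L U)) (l : Fin d) :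
    ContinuousOn (fun p => h ((Homeomorph.funSplitAt ℝ l).symm p))
      (Icc (L l) (U l) ×ˢ sideBox L U l) :=
  hh.comp (Homeomorph.funSplitAt ℝ l).symm.continuous.continuousOn
    fun _ hp => funSplitAt_symm_mem_rect hp.1 hp.2

theorem isCompact_rect (L U : Fin d → ℝ) : IsCompact (rect L U) :=
  isCompact_univ_pi fun _ => isCompact_Icc

theorem isCompact_sideBox (L U : Fin d → ℝ) (l : Fin d) : IsCompact (sideBox L U l) :=
  isCompact_univ_pi fun _ => isCompact_Icc

theorem continuousOn_marginalMean {h : (Fin d → ℝ) → ℝ} (hh : ContinuousOn h (rect L U))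
    (l : Fin d) : ContinuousOn (marginalMean L U h l) (Icc (L l) (U l)) := by
  simp_rw [funext (marginalMean_eq_setIntegral h l)]
  exact continuousOn_setIntegral_of_continuousOn_prod isCompact_Icc (isCompact_sideBox L U l)
    (continuousOn_comp_funSplitAt_symm hh l)

theorem abs_marginalMean_sub_le {h g : (Fin d → ℝ) → ℝ} (hh : ContinuousOn h (rect L U))
    (hg : ContinuousOn g (rect L U)) {e : ℝ} (hhg : ∀ x ∈ rect L U, |h x - g x| ≤ e)
    {l : Fin d} {t : ℝ} (ht : t ∈ Icc (L l) (U l)) :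
    |marginalMean L U h l t - marginalMean L U g l t| ≤ e * volume.real (sideBox L U l) := by
  have hK := isCompact_sideBox L U l
  have integrableOn_slice : ∀ {f : (Fin d → ℝ) → ℝ}, ContinuousOn f (rect L U) →
      IntegrableOn (fun y => f ((Homeomorph.funSplitAt ℝ l).symm (t, y))) (sideBox L U l) :=
    fun hf => ((continuousOn_comp_funSplitAt_symm hf l).comp
      (Continuous.prodMk_right t).continuousOn fun _ hy => ⟨ht, hy⟩).integrableOn_compact hK
  rw [marginalMean_eq_setIntegral, marginalMean_eq_setIntegral]
  exact abs_setIntegral_sub_setIntegral_le hK.measure_lt_top (integrableOn_slice hh)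
    (integrableOn_slice hg) fun y hy => hhg _ (funSplitAt_symm_mem_rect ht hy)

noncomputable def marginalSum (L U : Fin d → ℝ) (h : (Fin d → ℝ) → ℝ) (x : Fin d → ℝ) : ℝ :=
  ∑ l, marginalMean L U h l (x l)

theorem continuousOn_marginalSum {h : (Fin d → ℝ) → ℝ} (hh : ContinuousOn h (rect L U)) :
    ContinuousOn (marginalSum L U h) (rect L U) :=
  continuousOn_finsetSum _ fun l _ => (continuousOn_marginalMean hh l).comp
    (continuous_apply l).continuousOn fun _ hx => hx l (mem_univ l)

theorem marginalSum_le_of_isMinOn_marginalMean {h g : (Fin d → ℝ) → ℝ}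
    (hh : ContinuousOn h (rect L U)) (hg : ContinuousOn g (rect L U)) {e : ℝ}
    (hhg : ∀ x ∈ rect L U, |h x - g x| ≤ e) {x₀ x : Fin d → ℝ} (hx₀ : x₀ ∈ rect L U)
    (hx : x ∈ rect L U) (hmin : ∀ l, IsMinOn (marginalMean L U g l) (Icc (L l) (U l)) (x₀ l)) :
    marginalSum L U h x₀ ≤ marginalSum L U h x + 2 * e * ∑ l, volume.real (sideBox L U l) := by
  rw [Finset.mul_sum, marginalSum, marginalSum, ← Finset.sum_add_distrib]
  refine Finset.sum_le_sum fun l _ => ?_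
  obtain ⟨-, hx₀l⟩ := abs_le.1 (abs_marginalMean_sub_le hh hg hhg (hx₀ l (mem_univ l)))
  obtain ⟨hxl, -⟩ := abs_le.1 (abs_marginalMean_sub_le hh hg hhg (hx l (mem_univ l)))
  have hgl : marginalMean L U g l (x₀ l) ≤ marginalMean L U g l (x l) :=
    hmin l (hx l (mem_univ l))
  linarith

end MarginalMean

theorem stmt16_general (d : ℕ) (L U : Fin d → ℝ)
    (h : (Fin d → ℝ) → ℝ) (hcont : ContinuousOn h (rect L U))
    (xstar : Fin d → ℝ) (hxstar : xstar ∈ rect L U)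
    (hmin : ∀ x ∈ rect L U, h xstar ≤ h x)
    (huniq : ∀ x ∈ rect L U, x ≠ xstar → h xstar < h x)
    (hFOD : {x | x ∈ rect L U ∧ ∀ y ∈ rect L U, h x ≤ h y} =
      {x | x ∈ rect L U ∧ ∀ y ∈ rect L U,
        (∑ l, marginalMean L U h l (x l)) ≤ ∑ l, marginalMean L U h l (y l)})
    (φ : ℝ → ℝ) (hφc : Continuous φ)
    (g : ℕ → (Fin d → ℝ) → ℝ) (hgcont : ∀ n, ContinuousOn (g n) (rect L U))
    (ε : ℕ → ℝ) (hgε : ∀ n, ∀ x ∈ rect L U, |h x - g n x| ≤ ε n)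
    (hε : Filter.Tendsto ε Filter.atTop (nhds 0))
    (xhat : ℕ → Fin d → ℝ) (hxhatmem : ∀ n, xhat n ∈ rect L U)
    (hxhatmin : ∀ n, ∀ l, ∀ t ∈ Set.Icc (L l) (U l),
      marginalMean L U (g n) l (xhat n l) ≤ marginalMean L U (g n) l t)
    (a : ℕ → Fin d → ℝ) (hamem : ∀ n, a n ∈ rect L U)
    (ha : ∀ n, g n (a n) ≤ g n (xhat n)) :
    Filter.Tendsto (fun n => h (a n)) Filter.atTop (nhds (h xstar)) ∧
    Filter.Tendsto (fun n => φ (h (a n))) Filter.atTop (nhds (φ (h xstar))) := by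
  set V := ∑ l, volume.real (sideBox L U l)
  have hbound : Tendsto (fun n => marginalSum L U h xstar + 2 * ε n * V) atTop
      (𝓝 (marginalSum L U h xstar)) := by
    simpa using tendsto_const_nhds.add ((hε.const_mul 2).mul_const V)
  have hxhat : Tendsto xhat atTop (𝓝 xstar) :=
    (isCompact_rect L U).tendsto_nhds_of_minimizing (continuousOn_marginalSum hcont)
      (lt_of_setOf_isMinOn_eq (m := marginalSum L U h) hFOD hxstar huniq)
      (.of_forall hxhatmem) hbound (.of_forall fun n =>
        marginalSum_le_of_isMinOn_marginalMean hcont (hgcont n) (hgε n) (hxhatmem n) hxstar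
          (hxhatmin n))
  have hhxhat : Tendsto (fun n => h (xhat n)) atTop (𝓝 (h xstar)) :=
    (hcont xstar hxstar).tendsto.comp (tendsto_nhdsWithin_iff.2 ⟨hxhat, .of_forall hxhatmem⟩)
  have hha_le : ∀ n, h (a n) ≤ h (xhat n) + 2 * ε n := fun n => by
    have ha_err := (abs_le.1 (hgε n (a n) (hamem n))).2
    have hxhat_err := (abs_le.1 (hgε n (xhat n) (hxhatmem n))).1
    linarith [ha n]
  have hha : Tendsto (fun n => h (a n)) atTop (𝓝 (h xstar)) :=
    tendsto_of_tendsto_of_tendsto_of_le_of_le tendsto_const_nhds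
      (by simpa using hhxhat.add (hε.const_mul 2)) (fun n => hmin _ (hamem n)) hha_le
  exact ⟨hha, (hφc.tendsto _).comp hha⟩

/-- deterministic core of Corollary 1, consistency of BOMM+: With `h`, `x*`,
the first-order dominating condition, `φ`, `f = φ ∘ h`, approximants `g n` with uniform error
`ε n → 0`, and BOMM points `x̂ n` as in Statement 15, any sequence `a n ∈ X` with
`g n (a n) ≤ g n (x̂ n)` satisfies `h (a n) → h x*` and `f (a n) → f x*`. -/
theorem stmt16 (d : ℕ) (hd : 1 ≤ d) (L U : Fin d → ℝ) (hLU : ∀ l, L l < U l)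
    (h : (Fin d → ℝ) → ℝ) (hcont : ContinuousOn h (rect L U))
    (xstar : Fin d → ℝ) (hxstar : xstar ∈ rect L U)
    (hmin : ∀ x ∈ rect L U, h xstar ≤ h x)
    (huniq : ∀ x ∈ rect L U, x ≠ xstar → h xstar < h x)
    (hFOD : {x | x ∈ rect L U ∧ ∀ y ∈ rect L U, h x ≤ h y} =
      {x | x ∈ rect L U ∧ ∀ y ∈ rect L U,
        (∑ l, marginalMean L U h l (x l)) ≤ ∑ l, marginalMean L U h l (y l)})
    (φ : ℝ → ℝ) (hφc : Continuous φ) (hφm : StrictMono φ)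
    (g : ℕ → (Fin d → ℝ) → ℝ) (hgcont : ∀ n, ContinuousOn (g n) (rect L U))
    (ε : ℕ → ℝ) (hgε : ∀ n, ∀ x ∈ rect L U, |h x - g n x| ≤ ε n)
    (hε : Filter.Tendsto ε Filter.atTop (nhds 0))
    (xhat : ℕ → Fin d → ℝ) (hxhatmem : ∀ n, xhat n ∈ rect L U)
    (hxhatmin : ∀ n, ∀ l, ∀ t ∈ Set.Icc (L l) (U l),
      marginalMean L U (g n) l (xhat n l) ≤ marginalMean L U (g n) l t)
    (a : ℕ → Fin d → ℝ) (hamem : ∀ n, a n ∈ rect L U)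
    (ha : ∀ n, g n (a n) ≤ g n (xhat n)) :
    Filter.Tendsto (fun n => h (a n)) Filter.atTop (nhds (h xstar)) ∧
    Filter.Tendsto (fun n => φ (h (a n))) Filter.atTop (nhds (φ (h xstar))) :=
  stmt16_general d L U h hcont xstar hxstar hmin huniq hFOD φ hφc g hgcont ε hgε hε xhat hxhatmem
    hxhatmin a hamem ha
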